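/- arXiv:1912.08710 — 3 statements merged into one kernel-verified Lean document; each statement's English description precedes it below -/
import Mathlib

section
/- Let T > 0, τ > 0, let ζ : [0,T] → ℝ be continuous and let ξ : [0,T] → ℝ be differentiable with τ·ξ'(t) = ζ(t) − ξ(t) for all t ∈ [0,T]. Then for every real p > 1, (∫₀ᵀ |ξ(t)|ᵖ dt)^{1/p} ≤ (∫₀ᵀ |ζ(t)|ᵖ dt)^{1/p} + τ^{1/p}·|ξ(0)|. -/
open Real MeasureTheory intervalIntegral Set Filter
open scoped ENNReal NNReal

lemma aux_abs_sq {p : ℝ} (hp : 1 < p) (x : ℝ) : |x| ^ (p - 2) * x * x = |x| ^ p := by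
  rcases eq_or_ne x 0 with rfl | hx
  · simp [Real.zero_rpow (show p ≠ 0 by linarith)]
  · have h1 : x * x = |x| * |x| := (abs_mul_abs_self x).symm
    have ha : |x| ≠ 0 := abs_ne_zero.2 hx
    rw [mul_assoc, h1, ← mul_assoc, ← Real.rpow_add_one ha, ← Real.rpow_add_one ha]
    congr 1; ring

lemma aux_abs_mul {p : ℝ} (hp : 1 < p) (x : ℝ) : |x| ^ (p - 2) * |x| = |x| ^ (p - 1) := by
  rcases eq_or_ne x 0 with rfl | hx
  · simp [Real.zero_rpow (show p - 1 ≠ 0 by linarith)]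
  · rw [← Real.rpow_add_one (abs_ne_zero.2 hx)]; congr 1; ring

lemma aux_memLp {f : ℝ → ℝ} {T : ℝ} (hf : ContinuousOn f (Set.Icc 0 T)) (r : ℝ≥0∞) :
    MemLp f r (volume.restrict (Set.Ioc 0 T)) := by
  haveI : IsFiniteMeasure (volume.restrict (Set.Ioc (0:ℝ) T)) :=
    ⟨by rw [Measure.restrict_apply_univ]; exact measure_Ioc_lt_top⟩
  obtain ⟨C, hC⟩ := isCompact_Icc.exists_bound_of_continuousOn hf
  refine MemLp.of_bound
    ((hf.mono Set.Ioc_subset_Icc_self).aestronglyMeasurable measurableSet_Ioc) C ?_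
  filter_upwards [ae_restrict_mem measurableSet_Ioc] with x hx
  exact hC x (Set.Ioc_subset_Icc_self hx)

lemma aux_hasDerivAt_abs_rpow {p : ℝ} (hp : 1 < p) (x : ℝ) :
    HasDerivAt (fun y : ℝ => |y| ^ p) (p * |x| ^ (p - 2) * x) x := by
  rcases eq_or_ne x 0 with rfl | hx
  · simp only [abs_zero, mul_zero]
    rw [hasDerivAt_iff_tendsto_slope]
    have hb : Tendsto (fun y : ℝ => |y| ^ (p - 1)) (nhdsWithin 0 {(0:ℝ)}ᶜ) (nhds 0) := by
      have hc : ContinuousAt (fun y : ℝ => |y| ^ (p - 1)) 0 :=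
        (Real.continuousAt_rpow_const _ _ (Or.inr (by linarith))).comp
          continuous_abs.continuousAt
      have := hc.tendsto.mono_left (nhdsWithin_le_nhds (s := {(0:ℝ)}ᶜ))
      simpa [Real.zero_rpow (show p - 1 ≠ 0 by linarith)] using this
    refine squeeze_zero_norm' ?_ hb
    filter_upwards [self_mem_nhdsWithin] with y hy
    have hy0 : y ≠ 0 := hy
    have : slope (fun y : ℝ => |y| ^ p) 0 y = |y| ^ p / y := by
      simp [slope_def_field, Real.zero_rpow (show p ≠ 0 by linarith)]
    rw [this]
    have h1 : ‖|y| ^ p / y‖ = |y| ^ p / |y| := by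
      rw [norm_div, Real.norm_eq_abs, Real.norm_eq_abs,
        abs_of_nonneg (Real.rpow_nonneg (abs_nonneg y) p)]
    rw [h1]
    rw [show p - 1 = p - (1:ℝ) from rfl, Real.rpow_sub (abs_pos.2 hy0), Real.rpow_one]
  · have h1 : HasDerivAt (fun y : ℝ => |y| ^ p)
        (p * |x| ^ (p - 1) * (SignType.sign x : ℝ)) x :=
      (Real.hasDerivAt_rpow_const (p := p) (Or.inl (abs_ne_zero.2 hx))).comp x
        (hasDerivAt_abs hx)
    convert h1 using 1
    have h2 : |x| ^ (p - 1) = |x| ^ (p - 2) * |x| := by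
      rw [← Real.rpow_add_one (abs_ne_zero.2 hx)]; ring_nf
    have h3 : (SignType.sign x : ℝ) * |x| = x := sign_mul_abs x
    rw [h2]
    linear_combination (-(p * |x| ^ (p - 2))) * h3

lemma aux_cont_abs_rpow_mul {p : ℝ} (hp : 1 < p) :
    Continuous (fun x : ℝ => |x| ^ (p - 2) * x) := by
  rw [continuous_iff_continuousAt]
  intro x
  rcases eq_or_ne x 0 with rfl | hx
  · unfold ContinuousAt
    simp only [mul_zero]
    have hb : Tendsto (fun y : ℝ => |y| ^ (p - 1)) (nhds 0) (nhds 0) := by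
      have hc : ContinuousAt (fun y : ℝ => |y| ^ (p - 1)) 0 :=
        (Real.continuousAt_rpow_const _ _ (Or.inr (by linarith))).comp
          continuous_abs.continuousAt
      simpa [Real.zero_rpow (show p - 1 ≠ 0 by linarith)] using hc.tendsto
    refine squeeze_zero_norm (fun y => ?_) hb
    rcases eq_or_ne y 0 with rfl | hy
    · simp [Real.rpow_nonneg]
    · rw [Real.norm_eq_abs, abs_mul, abs_of_nonneg (Real.rpow_nonneg (abs_nonneg y) _),
        ← Real.rpow_add_one (abs_ne_zero.2 hy)]
      ring_nf
      exact le_refl _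
  · exact ((Real.continuousAt_rpow_const _ _ (Or.inl (abs_ne_zero.2 hx))).comp
      continuous_abs.continuousAt).mul continuousAt_id

lemma aux_alg {p A B C : ℝ} (hp : 1 < p) (hA : 0 ≤ A) (hB : 0 ≤ B) (hC : 0 ≤ C)
    (h : A ^ p ≤ A ^ (p - 1) * B + C ^ p / p) : A ≤ B + C := by
  by_contra hlt
  push_neg at hlt
  have hA0 : 0 < A := lt_of_le_of_lt (by positivity) hlt
  have hCA : C ≤ A := le_of_lt (lt_of_le_of_lt (le_add_of_nonneg_left hB) hlt)
  have h1 : C ^ p / p ≤ C ^ p := by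
    apply div_le_self (Real.rpow_nonneg hC p) (by linarith)
  have h2 : C ^ p ≤ A ^ (p - 1) * C := by
    rcases eq_or_ne C 0 with rfl | hC0
    · rw [Real.zero_rpow (by linarith : p ≠ 0)]; positivity
    · have hCe : C ^ p = C ^ (p - 1) * C := by
        rw [← Real.rpow_add_one hC0]; congr 1; ring
      rw [hCe]
      exact mul_le_mul_of_nonneg_right
        (Real.rpow_le_rpow hC hCA (by linarith)) hC
  have h3 : A ^ p < A ^ p := by
    calc A ^ p ≤ A ^ (p - 1) * B + C ^ p / p := h
      _ ≤ A ^ (p - 1) * B + A ^ (p - 1) * C := by linarith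
      _ = A ^ (p - 1) * (B + C) := by ring
      _ < A ^ (p - 1) * A := by
          exact mul_lt_mul_of_pos_left hlt (Real.rpow_pos_of_pos hA0 _)
      _ = A ^ p := by
          rw [← Real.rpow_add_one (ne_of_gt hA0)]; ring_nf
  exact lt_irrefl _ h3


/-- Shadow-limit ODE: `L^p` estimate `‖ξ‖_{L^p(0,T)} ≤ ‖ζ‖_{L^p(0,T)} + τ^{1/p}·|ξ(0)|`. -/
theorem stmt_1 (T τ : ℝ) (hT : 0 < T) (hτ : 0 < τ)
    (ζ ξ ξ' : ℝ → ℝ)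
    (hζ : ContinuousOn ζ (Set.Icc 0 T))
    (hξ : ∀ t ∈ Set.Icc (0:ℝ) T, HasDerivAt ξ (ξ' t) t)
    (hode : ∀ t ∈ Set.Icc (0:ℝ) T, τ * ξ' t = ζ t - ξ t) :
    ∀ p : ℝ, 1 < p →
      (∫ t in (0:ℝ)..T, |ξ t| ^ p) ^ (1/p)
        ≤ (∫ t in (0:ℝ)..T, |ζ t| ^ p) ^ (1/p) + τ ^ (1/p) * |ξ 0| := by
  intro p hp
  have hp0 : (0:ℝ) < p := by linarith
  set q : ℝ := p / (p - 1) with hq_def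
  have hpq : p.HolderConjugate q := Real.holderConjugate_iff.mpr ⟨hp, by
    rw [hq_def]; field_simp; ring⟩
  have hcξ : ContinuousOn ξ (Set.Icc 0 T) := fun t ht =>
    (hξ t ht).continuousAt.continuousWithinAt
  have hcξ' : ContinuousOn ξ' (Set.Icc 0 T) := by
    refine ContinuousOn.congr ((hζ.sub hcξ).div_const τ) fun t ht => ?_
    have h := hode t ht
    field_simp
    simp only [Pi.sub_apply]
    linarith
  -- the functions
  set f : ℝ → ℝ := fun t => |ξ t| ^ p with hf_def
  set g : ℝ → ℝ := fun t => |ξ t| ^ (p - 2) * ξ t * ζ t with hg_def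
  set h : ℝ → ℝ := fun t => |ξ t| ^ (p - 1) * |ζ t| with hh_def
  set Φ : ℝ → ℝ := fun t => p * (|ξ t| ^ (p - 2) * ξ t) * ξ' t with hΦ_def
  -- continuity
  have hcf : ContinuousOn f (Set.Icc 0 T) :=
    (Real.continuous_rpow_const hp0.le).comp_continuousOn hcξ.abs
  have hcg : ContinuousOn g (Set.Icc 0 T) :=
    (((aux_cont_abs_rpow_mul hp).comp_continuousOn hcξ).mul hζ)
  have hch : ContinuousOn h (Set.Icc 0 T) :=
    ((Real.continuous_rpow_const (by linarith : (0:ℝ) ≤ p - 1)).comp_continuousOn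
      hcξ.abs).mul hζ.abs
  have hcΦ : ContinuousOn Φ (Set.Icc 0 T) :=
    (continuousOn_const.mul ((aux_cont_abs_rpow_mul hp).comp_continuousOn hcξ)).mul hcξ'
  have hif : IntervalIntegrable f volume 0 T :=
    (by rwa [Set.uIcc_of_le hT.le] : ContinuousOn f (Set.uIcc 0 T)).intervalIntegrable
  have hig : IntervalIntegrable g volume 0 T :=
    (by rwa [Set.uIcc_of_le hT.le] : ContinuousOn g (Set.uIcc 0 T)).intervalIntegrable
  have hih : IntervalIntegrable h volume 0 T :=
    (by rwa [Set.uIcc_of_le hT.le] : ContinuousOn h (Set.uIcc 0 T)).intervalIntegrable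
  have hiΦ : IntervalIntegrable Φ volume 0 T :=
    (by rwa [Set.uIcc_of_le hT.le] : ContinuousOn Φ (Set.uIcc 0 T)).intervalIntegrable
  -- FTC
  have hFTC : ∫ t in (0:ℝ)..T, Φ t = |ξ T| ^ p - |ξ 0| ^ p := by
    refine integral_eq_sub_of_hasDerivAt (f := fun u => |ξ u| ^ p) (fun t ht => ?_) hiΦ
    rw [Set.uIcc_of_le hT.le] at ht
    have := (aux_hasDerivAt_abs_rpow hp (ξ t)).comp t (hξ t ht)
    refine HasDerivAt.congr_deriv this ?_
    simp only [hΦ_def]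
    ring
  -- Φ = (p/τ) * g - (p/τ) * f on the interval
  have hfg : Set.EqOn Φ (fun t => (p/τ) * g t - (p/τ) * f t) (Set.uIcc 0 T) := by
    intro t ht
    rw [Set.uIcc_of_le hT.le] at ht
    have hξ't : ξ' t = (ζ t - ξ t) / τ := by
      have := hode t ht; field_simp; linarith
    have e1 : Φ t = (p/τ) * g t - (p/τ) * (|ξ t| ^ (p - 2) * ξ t * ξ t) := by
      simp only [hΦ_def, hg_def]
      rw [hξ't]
      field_simp
    simp only [e1, hf_def]
    rw [aux_abs_sq hp]
  have hI : (p/τ) * (∫ t in (0:ℝ)..T, g t) - (p/τ) * (∫ t in (0:ℝ)..T, f t)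
      = |ξ T| ^ p - |ξ 0| ^ p := by
    rw [← hFTC, intervalIntegral.integral_congr hfg,
      intervalIntegral.integral_sub (hig.const_mul _) (hif.const_mul _),
      intervalIntegral.integral_const_mul, intervalIntegral.integral_const_mul]
  -- F ≤ G + (τ/p)|ξ0|^p
  set F : ℝ := ∫ t in (0:ℝ)..T, f t with hF_def
  set G : ℝ := ∫ t in (0:ℝ)..T, g t with hG_def
  have hRnn : (0:ℝ) ≤ |ξ T| ^ p := Real.rpow_nonneg (abs_nonneg _) _
  have hF_le : F ≤ G + (τ/p) * |ξ 0| ^ p := by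
    have e : G - F = τ/p * (|ξ T| ^ p - |ξ 0| ^ p) := by
      have hp' : p ≠ 0 := hp0.ne'
      have hτ' : τ ≠ 0 := hτ.ne'
      field_simp at hI ⊢
      linarith
    have hpos : 0 ≤ τ/p * |ξ T| ^ p := mul_nonneg (div_pos hτ hp0).le hRnn
    nlinarith [e, hpos]
  -- G ≤ H
  set H : ℝ := ∫ t in (0:ℝ)..T, h t with hH_def
  have hG_le : G ≤ H := by
    refine intervalIntegral.integral_mono_on hT.le hig hih fun t ht => ?_
    have : g t ≤ |g t| := le_abs_self _
    refine this.trans (le_of_eq ?_)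
    simp only [hg_def, hh_def]
    rw [abs_mul, abs_mul, abs_of_nonneg (Real.rpow_nonneg (abs_nonneg _) _),
      aux_abs_mul hp]
  -- Hölder
  set μ : Measure ℝ := volume.restrict (Set.Ioc 0 T) with hμ_def
  set I : ℝ := ∫ t, |ξ t| ^ p ∂μ with hI_def
  set J : ℝ := ∫ t, |ζ t| ^ p ∂μ with hJ_def
  have hInn : 0 ≤ I := integral_nonneg fun t => Real.rpow_nonneg (abs_nonneg _) _
  have hJnn : 0 ≤ J := integral_nonneg fun t => Real.rpow_nonneg (abs_nonneg _) _
  have hFI : F = I := by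
    rw [hF_def, intervalIntegral.integral_of_le hT.le]
  have hH_holder : H ≤ I ^ (1/q) * J ^ (1/p) := by
    have hmem1 : MemLp (fun t => |ξ t| ^ (p - 1)) (ENNReal.ofReal q) μ :=
      aux_memLp ((Real.continuous_rpow_const (by linarith : (0:ℝ) ≤ p - 1)).comp_continuousOn
        hcξ.abs) _
    have hmem2 : MemLp ζ (ENNReal.ofReal p) μ := aux_memLp hζ _
    have key := MeasureTheory.integral_mul_norm_le_Lp_mul_Lq (μ := μ) hpq.symm hmem1 hmem2
    have e1 : ∫ a, ‖|ξ a| ^ (p - 1)‖ * ‖ζ a‖ ∂μ = H := by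
      rw [hH_def, intervalIntegral.integral_of_le hT.le]
      refine integral_congr_ae (Eventually.of_forall fun t => ?_)
      show ‖|ξ t| ^ (p - 1)‖ * ‖ζ t‖ = |ξ t| ^ (p - 1) * |ζ t|
      rw [Real.norm_eq_abs, Real.norm_eq_abs,
        abs_of_nonneg (Real.rpow_nonneg (abs_nonneg _) _)]
    have e2 : ∫ a, ‖|ξ a| ^ (p - 1)‖ ^ q ∂μ = I := by
      rw [hI_def]
      refine integral_congr_ae (Eventually.of_forall fun t => ?_)
      show ‖|ξ t| ^ (p - 1)‖ ^ q = |ξ t| ^ p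
      rw [Real.norm_eq_abs, abs_of_nonneg (Real.rpow_nonneg (abs_nonneg _) _),
        ← Real.rpow_mul (abs_nonneg _), hpq.sub_one_mul_conj]
    have e3 : ∫ a, ‖ζ a‖ ^ p ∂μ = J := by
      rw [hJ_def]
      refine integral_congr_ae (Eventually.of_forall fun t => ?_)
      show ‖ζ t‖ ^ p = |ζ t| ^ p
      rw [Real.norm_eq_abs]
    rw [e1, e2, e3] at key
    exact key
  -- assemble
  have hmain : I ≤ I ^ (1/q) * J ^ (1/p) + (τ/p) * |ξ 0| ^ p := by
    have hstep : F ≤ I ^ (1/q) * J ^ (1/p) + (τ/p) * |ξ 0| ^ p := by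
      linarith [hF_le, hG_le, hH_holder]
    rw [hFI] at hstep
    exact hstep
  -- final algebra
  rw [intervalIntegral.integral_of_le hT.le, hFI]
  show I ^ (1/p) ≤ J ^ (1/p) + τ ^ (1/p) * |ξ 0|
  refine aux_alg hp (Real.rpow_nonneg hInn _) (Real.rpow_nonneg hJnn _)
    (mul_nonneg (Real.rpow_nonneg hτ.le _) (abs_nonneg _)) ?_
  have hq1 : 1/q = (1/p) * (p - 1) := by
    rw [hq_def]; field_simp
  have eA : (I ^ (1/p)) ^ p = I := by
    rw [← Real.rpow_mul hInn, one_div_mul_cancel hp0.ne', Real.rpow_one]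
  have eA' : (I ^ (1/p)) ^ (p - 1) = I ^ (1/q) := by
    rw [← Real.rpow_mul hInn, ← hq1]
  have eC : (τ ^ (1/p) * |ξ 0|) ^ p = τ * |ξ 0| ^ p := by
    rw [Real.mul_rpow (Real.rpow_nonneg hτ.le _) (abs_nonneg _),
      ← Real.rpow_mul hτ.le, one_div_mul_cancel hp0.ne', Real.rpow_one]
  rw [eA, eA', eC]
  have : τ * |ξ 0| ^ p / p = τ / p * |ξ 0| ^ p := by ring
  rw [this]
  exact hmain
end

section
/- Let T > 0, τ > 0, and let ξ, ζ : [0,T] → ℝ be continuously differentiable with τ·ξ'(t) = ζ(t) − ξ(t) for all t ∈ [0,T]. Then ∫₀ᵀ (ζ(t) − ξ(t))² dt ≤ τ·[ (1/2)·ξ(0)² − (1/2)·ξ(T)² + ξ(T)·ζ(T) − ξ(0)·ζ(0) + (∫₀ᵀ |ζ'(t)| dt)·(sup_{t∈[0,T]} |ξ(t)|) ]. In particular, if ξ(0), ξ(T), ζ, ζ' and ξ are bounded uniformly in τ, then ‖ζ − ξ‖²_{L²(0,T)} ≤ C·τ for a constant C independent of τ. -/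
/-- Shadow-limit ODE: `‖ζ − ξ‖²_{L²(0,T)} = O(τ)`. -/
theorem stmt_2 (T τ : ℝ) (hT : 0 < T) (hτ : 0 < τ)
    (ξ ζ ξ' ζ' : ℝ → ℝ)
    (hξ : ∀ t ∈ Set.Icc (0:ℝ) T, HasDerivAt ξ (ξ' t) t)
    (hζ : ∀ t ∈ Set.Icc (0:ℝ) T, HasDerivAt ζ (ζ' t) t)
    (hξ' : ContinuousOn ξ' (Set.Icc 0 T))
    (hζ' : ContinuousOn ζ' (Set.Icc 0 T))
    (hode : ∀ t ∈ Set.Icc (0:ℝ) T, τ * ξ' t = ζ t - ξ t) :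
    ∫ t in (0:ℝ)..T, (ζ t - ξ t)^2
      ≤ τ * ((1/2) * (ξ 0)^2 - (1/2) * (ξ T)^2 + ξ T * ζ T - ξ 0 * ζ 0
          + (∫ t in (0:ℝ)..T, |ζ' t|) * sSup ((fun t => |ξ t|) '' Set.Icc 0 T)) := by
  have hI : Set.uIcc (0:ℝ) T = Set.Icc 0 T := Set.uIcc_of_le hT.le
  have hξu : ∀ t ∈ Set.uIcc (0:ℝ) T, HasDerivAt ξ (ξ' t) t := by rw [hI]; exact hξ
  have hζu : ∀ t ∈ Set.uIcc (0:ℝ) T, HasDerivAt ζ (ζ' t) t := by rw [hI]; exact hζ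
  have hξc : ContinuousOn ξ (Set.Icc 0 T) :=
    fun t ht => ((hξ t ht).continuousAt).continuousWithinAt
  have hζc : ContinuousOn ζ (Set.Icc 0 T) :=
    fun t ht => ((hζ t ht).continuousAt).continuousWithinAt
  set M := sSup ((fun t => |ξ t|) '' Set.Icc 0 T) with hMdef
  have hcomp : IsCompact ((fun t => |ξ t|) '' Set.Icc 0 T) :=
    isCompact_Icc.image_of_continuousOn hξc.abs
  have hMb : ∀ t ∈ Set.Icc (0:ℝ) T, |ξ t| ≤ M := fun t ht =>
    le_csSup hcomp.bddAbove ⟨t, ht, rfl⟩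
  -- integrabilities
  have iξ' : IntervalIntegrable ξ' MeasureTheory.volume 0 T :=
    (hξ'.mono hI.le).intervalIntegrable
  have iζ' : IntervalIntegrable ζ' MeasureTheory.volume 0 T :=
    (hζ'.mono hI.le).intervalIntegrable
  have iξζ' : IntervalIntegrable (fun t => ξ t * ζ' t) MeasureTheory.volume 0 T :=
    ((hξc.mul hζ').mono hI.le).intervalIntegrable
  have iξ'ζ : IntervalIntegrable (fun t => ξ' t * ζ t) MeasureTheory.volume 0 T :=
    ((hξ'.mul hζc).mono hI.le).intervalIntegrable
  have iξ'ξ : IntervalIntegrable (fun t => ξ' t * ξ t) MeasureTheory.volume 0 T :=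
    ((hξ'.mul hξc).mono hI.le).intervalIntegrable
  have iξξ' : IntervalIntegrable (fun t => ξ t * ξ' t) MeasureTheory.volume 0 T :=
    ((hξc.mul hξ').mono hI.le).intervalIntegrable
  have iMζ' : IntervalIntegrable (fun t => |ζ' t| * M) MeasureTheory.volume 0 T :=
    (iζ'.abs).mul_const M
  have iabs : IntervalIntegrable (fun t => |ξ t * ζ' t|) MeasureTheory.volume 0 T := iξζ'.abs
  -- integration by parts
  have ibp1 : (∫ t in (0:ℝ)..T, (ξ' t * ζ t + ξ t * ζ' t))
      = ξ T * ζ T - ξ 0 * ζ 0 :=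
    intervalIntegral.integral_deriv_mul_eq_sub hξu hζu iξ' iζ'
  have ibp2 : (∫ t in (0:ℝ)..T, (ξ' t * ξ t + ξ t * ξ' t))
      = ξ T * ξ T - ξ 0 * ξ 0 :=
    intervalIntegral.integral_deriv_mul_eq_sub hξu hξu iξ' iξ'
  rw [intervalIntegral.integral_add iξ'ζ iξζ'] at ibp1
  rw [intervalIntegral.integral_add iξ'ξ iξξ'] at ibp2
  have heq : (fun t => ξ' t * ξ t) = (fun t => ξ t * ξ' t) := by
    funext t; ring
  rw [heq] at ibp2
  -- bound on ∫ ξ ζ'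
  have hJle : |∫ t in (0:ℝ)..T, ξ t * ζ' t| ≤ (∫ t in (0:ℝ)..T, |ζ' t|) * M := by
    calc |∫ t in (0:ℝ)..T, ξ t * ζ' t| ≤ ∫ t in (0:ℝ)..T, |ξ t * ζ' t| :=
          intervalIntegral.abs_integral_le_integral_abs hT.le
      _ ≤ ∫ t in (0:ℝ)..T, |ζ' t| * M := by
          apply intervalIntegral.integral_mono_on hT.le iabs iMζ'
          intro t ht
          rw [abs_mul]
          calc |ξ t| * |ζ' t| ≤ M * |ζ' t| :=
                mul_le_mul_of_nonneg_right (hMb t ht) (abs_nonneg _)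
            _ = |ζ' t| * M := by ring
      _ = (∫ t in (0:ℝ)..T, |ζ' t|) * M := by
          rw [intervalIntegral.integral_mul_const]
  -- main computation
  have hmain : (∫ t in (0:ℝ)..T, (ζ t - ξ t)^2)
      = τ * ((∫ t in (0:ℝ)..T, ξ' t * ζ t) - ∫ t in (0:ℝ)..T, ξ t * ξ' t) := by
    rw [← intervalIntegral.integral_sub iξ'ζ iξξ', ← intervalIntegral.integral_const_mul]
    apply intervalIntegral.integral_congr
    intro t ht
    rw [hI] at ht
    have h := hode t ht
    show (ζ t - ξ t) ^ 2 = τ * (ξ' t * ζ t - ξ t * ξ' t)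
    linear_combination (-(ζ t - ξ t)) * h
  rw [hmain]
  have h1 : (∫ t in (0:ℝ)..T, ξ' t * ζ t)
      = ξ T * ζ T - ξ 0 * ζ 0 - ∫ t in (0:ℝ)..T, ξ t * ζ' t := by linarith
  have h2 : (∫ t in (0:ℝ)..T, ξ t * ξ' t) = (1/2) * (ξ T * ξ T - ξ 0 * ξ 0) := by
    linarith
  rw [h1, h2]
  have habs := abs_le.mp hJle
  have := habs.1
  apply mul_le_mul_of_nonneg_left _ hτ.le
  nlinarith [habs.1]
end

section
/- Fix T > 0, M > 0, q ∈ (1, √2), p > q²/(2 − q²), and let β be a real number with (1+p)·q²/2 < β < p. Define on [0,T): ρ₀(t) = M^{−p}·exp(−M·p/((q−1)(T−t))), ρ_S(t) = M^{−1−p}·exp(−(1+p)·q²·M/((q−1)(T−t))) and ρ(t) = exp(−M·β/((q−1)(T−t))). Then there exists a constant C > 0 such that for all t ∈ [0,T): ρ₀(t) ≤ C·ρ(t), ρ_S(t) ≤ C·ρ(t), |ρ'(t)|·ρ₀(t) ≤ C·ρ(t)², and ρ(t)² ≤ C·ρ_S(t). -/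
/-- For `a > 0` and `x ≥ 0`, `x^2 * exp (-(a*x)) ≤ 4 / a^2`. -/
lemma sq_mul_exp_neg_le (a x : ℝ) (ha : 0 < a) (hx : 0 ≤ x) :
    x^2 * Real.exp (-(a*x)) ≤ 4 / a^2 := by
  have hE : Real.exp (a*x) = (Real.exp (a*x/2))^2 := by
    rw [sq, ← Real.exp_add]; ring_nf
  have h1 : a*x/2 + 1 ≤ Real.exp (a*x/2) := Real.add_one_le_exp _
  have h2 : (0:ℝ) ≤ a*x/2 := by positivity
  have h3 : a^2 * x^2 ≤ 4 * Real.exp (a*x) := by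
    rw [hE]; nlinarith [sq_nonneg (Real.exp (a*x/2) - a*x/2)]
  have h4 : Real.exp (-(a*x)) = (Real.exp (a*x))⁻¹ := Real.exp_neg _
  rw [h4, le_div_iff₀ (by positivity : (0:ℝ) < a^2)]
  calc x^2 * (Real.exp (a*x))⁻¹ * a^2 = (a^2 * x^2) * (Real.exp (a*x))⁻¹ := by ring
    _ ≤ (4 * Real.exp (a*x)) * (Real.exp (a*x))⁻¹ := by
        exact mul_le_mul_of_nonneg_right h3 (by positivity)
    _ = 4 := by field_simp

set_option maxHeartbeats 1000000 in
/-- The intermediate weight `ρ` of the source-term method satisfies the four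
comparison inequalities with `ρ₀` and `ρ_S`. -/
theorem stmt_11 (T M q p β : ℝ) (hT : 0 < T) (hM : 0 < M)
    (hq1 : 1 < q) (hq2 : q < Real.sqrt 2) (hp : q^2/(2-q^2) < p)
    (hβ1 : (1+p)*q^2/2 < β) (hβ2 : β < p) :
    ∃ C : ℝ, 0 < C ∧ ∀ t ∈ Set.Ico (0:ℝ) T,
      M ^ (-p) * Real.exp (-(M*p)/((q-1)*(T-t)))
          ≤ C * Real.exp (-(M*β)/((q-1)*(T-t))) ∧
      M ^ (-(1+p)) * Real.exp (-((1+p)*q^2*M)/((q-1)*(T-t)))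
          ≤ C * Real.exp (-(M*β)/((q-1)*(T-t))) ∧
      |deriv (fun u => Real.exp (-(M*β)/((q-1)*(T-u)))) t|
            * (M ^ (-p) * Real.exp (-(M*p)/((q-1)*(T-t))))
          ≤ C * (Real.exp (-(M*β)/((q-1)*(T-t))))^2 ∧
      (Real.exp (-(M*β)/((q-1)*(T-t))))^2
          ≤ C * (M ^ (-(1+p)) * Real.exp (-((1+p)*q^2*M)/((q-1)*(T-t)))) := by
  have hq0 : 0 < q - 1 := by linarith
  have hqq : q^2 < 2 := by
    have h2 : Real.sqrt 2 ^ 2 = 2 := Real.sq_sqrt (by norm_num)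
    nlinarith [Real.sqrt_nonneg 2]
  have hp0 : 0 < p := lt_trans (div_pos (by nlinarith) (by linarith)) hp
  have hβ0 : 0 < β := lt_trans (by nlinarith) hβ1
  have hq2sq : 1 < q^2 := by nlinarith
  have hβq : β < (1+p)*q^2 := by
    have h : (1+p) ≤ (1+p)*q^2 := le_mul_of_one_le_right (by linarith) hq2sq.le
    linarith
  have h2β : (1+p)*q^2 < 2*β := by linarith
  have hpβ : 0 < p - β := by linarith
  -- positive constant pieces
  have hC1 : (0:ℝ) < M ^ (-p) := Real.rpow_pos_of_pos hM _
  have hC2 : (0:ℝ) < M ^ (-(1+p)) := Real.rpow_pos_of_pos hM _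
  have hC4 : (0:ℝ) < M ^ (1+p) := Real.rpow_pos_of_pos hM _
  set C3 : ℝ := M ^ (-p) * (β*(q-1)/M) * (4/(p-β)^2) with hC3def
  have hC3 : 0 < C3 := by
    apply mul_pos (mul_pos hC1 (by positivity)) (by positivity)
  refine ⟨M ^ (-p) + M ^ (-(1+p)) + M ^ (1+p) + C3, by positivity, ?_⟩
  intro t ht
  obtain ⟨ht0, htT⟩ := ht
  have hTt : 0 < T - t := by linarith
  have hD : 0 < (q-1)*(T-t) := mul_pos hq0 hTt
  set D : ℝ := (q-1)*(T-t) with hDdef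
  set s : ℝ := M / D with hsdef
  have hs : 0 < s := div_pos hM hD
  have key : ∀ a : ℝ, -(a*M)/D = -(a*s) := by
    intro a; rw [hsdef]; field_simp
  have e1 : -(M*p)/D = -(p*s) := by rw [← key p]; ring_nf
  have e2 : -((1+p)*q^2*M)/D = -(((1+p)*q^2)*s) := key _
  have e3 : -(M*β)/D = -(β*s) := by rw [← key β]; ring_nf
  set E : ℝ := Real.exp (-(β*s)) with hEdef
  have hE : 0 < E := Real.exp_pos _
  clear_value E s D C3
  -- derivative computation
  have hder : deriv (fun u => Real.exp (-(M*β)/((q-1)*(T-u)))) t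
      = Real.exp (-(M*β)/D) * (-(M*β) * ((q-1)/D^2)) := by
    rw [hDdef]
    have hD' : (0:ℝ) < (q-1)*(T-t) := mul_pos hq0 hTt
    have h1 : HasDerivAt (fun u : ℝ => (q-1)*(T-u)) (-(q-1)) t := by
      simpa using ((hasDerivAt_id t).const_sub T).const_mul (q-1)
    have h2 := h1.inv (ne_of_gt hD')
    have h3 := h2.const_mul (-(M*β))
    have h4 : HasDerivAt (fun u => -(M*β)/((q-1)*(T-u)))
        (-(M*β) * ((q-1)/((q-1)*(T-t))^2)) t := by
      have heq : (fun u => -(M*β)/((q-1)*(T-u)))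
          = fun u => -(M*β) * ((q-1)*(T-u))⁻¹ := by
        funext u; rw [div_eq_mul_inv]
      rw [heq]
      refine h3.congr_deriv ?_
      ring
    exact h4.exp.deriv
  have habs : |deriv (fun u => Real.exp (-(M*β)/((q-1)*(T-u)))) t|
      = E * (M*β * ((q-1)/D^2)) := by
    rw [hder, e3, abs_mul, abs_of_pos (Real.exp_pos _), abs_mul, abs_neg,
      abs_of_pos (by positivity : (0:ℝ) < M*β),
      abs_of_pos (show (0:ℝ) < (q-1)/D^2 by positivity), ← hEdef]
  rw [e1, e2, e3, habs, ← hEdef]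
  have hsplit1 : Real.exp (-(p*s)) = E * Real.exp (-((p-β)*s)) := by
    rw [hEdef, ← Real.exp_add]; ring_nf
  have hexp1 : Real.exp (-((p-β)*s)) ≤ 1 := Real.exp_le_one_iff.mpr (by nlinarith)
  have hexp2 : Real.exp (-(((1+p)*q^2)*s)) ≤ E := by
    rw [hEdef]; exact Real.exp_le_exp.mpr (by nlinarith)
  refine ⟨?_, ?_, ?_, ?_⟩
  · -- ρ₀ ≤ C ρ
    rw [hsplit1]
    calc M ^ (-p) * (E * Real.exp (-((p-β)*s)))
        ≤ M ^ (-p) * (E * 1) := by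
          apply mul_le_mul_of_nonneg_left (mul_le_mul_of_nonneg_left hexp1 hE.le) hC1.le
      _ ≤ (M ^ (-p) + M ^ (-(1+p)) + M ^ (1+p) + C3) * E := by
          rw [mul_one]; apply mul_le_mul_of_nonneg_right (by linarith) hE.le
  · -- ρ_S ≤ C ρ
    calc M ^ (-(1+p)) * Real.exp (-(((1+p)*q^2)*s))
        ≤ M ^ (-(1+p)) * E := mul_le_mul_of_nonneg_left hexp2 hC2.le
      _ ≤ (M ^ (-p) + M ^ (-(1+p)) + M ^ (1+p) + C3) * E :=
          mul_le_mul_of_nonneg_right (by linarith) hE.le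
  · -- |ρ'| ρ₀ ≤ C ρ²
    have hD2 : M * ((q-1)/D^2) = (q-1)/M * s^2 := by
      rw [hsdef]; field_simp
    have hbound : s^2 * Real.exp (-((p-β)*s)) ≤ 4/(p-β)^2 :=
      sq_mul_exp_neg_le (p-β) s hpβ hs.le
    rw [hsplit1]
    have lhs_eq : E * (M*β * ((q-1)/D^2)) * (M ^ (-p) * (E * Real.exp (-((p-β)*s))))
        = (M ^ (-p) * (β*(q-1)/M)) * (s^2 * Real.exp (-((p-β)*s))) * E^2 := by
      have : M*β * ((q-1)/D^2) = β * ((q-1)/M * s^2) := by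
        rw [← hD2]; ring
      rw [this]; ring
    rw [lhs_eq]
    have h1 : (M ^ (-p) * (β*(q-1)/M)) * (s^2 * Real.exp (-((p-β)*s)))
        ≤ C3 := by
      rw [hC3def]
      exact mul_le_mul_of_nonneg_left hbound
        (by positivity : (0:ℝ) ≤ M ^ (-p) * (β*(q-1)/M))
    calc (M ^ (-p) * (β*(q-1)/M)) * (s^2 * Real.exp (-((p-β)*s))) * E^2
        ≤ C3 * E^2 := mul_le_mul_of_nonneg_right h1 (by positivity)
      _ ≤ (M ^ (-p) + M ^ (-(1+p)) + M ^ (1+p) + C3) * E^2 :=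
          mul_le_mul_of_nonneg_right (by linarith) (by positivity)
  · -- ρ² ≤ C ρ_S
    have hM1 : M ^ (1+p) * M ^ (-(1+p)) = 1 := by
      rw [← Real.rpow_add hM, show (1+p) + -(1+p) = (0:ℝ) by ring, Real.rpow_zero]
    have hE2 : E^2 ≤ Real.exp (-(((1+p)*q^2)*s)) := by
      rw [hEdef, sq, ← Real.exp_add]
      apply Real.exp_le_exp.mpr
      nlinarith
    calc E^2 ≤ Real.exp (-(((1+p)*q^2)*s)) := hE2
      _ = (M ^ (1+p) * M ^ (-(1+p))) * Real.exp (-(((1+p)*q^2)*s)) := by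
          rw [hM1, one_mul]
      _ = M ^ (1+p) * (M ^ (-(1+p)) * Real.exp (-(((1+p)*q^2)*s))) := by ring
      _ ≤ (M ^ (-p) + M ^ (-(1+p)) + M ^ (1+p) + C3)
            * (M ^ (-(1+p)) * Real.exp (-(((1+p)*q^2)*s))) := by
          apply mul_le_mul_of_nonneg_right (by linarith) (by positivity)
end
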